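/- Let O be the order of conductor f in an imaginary quadratic field K, where f = l_1^{λ_1}⋯l_t^{λ_t} with the l_k distinct primes and λ_k > 0. Let 𝔞 be a proper O-ideal, and let m be an arbitrary positive integer written as m = n · l_1^{h_1}⋯l_t^{h_t}, where n is a positive integer relatively prime to f and h_1, …, h_t ≥ 0. Then N(𝔞) = m if and only if there exist a proper O-ideal 𝔟 with N(𝔟) = n and proper O-ideals 𝔠_1, …, 𝔠_t with N(𝔠_k) = l_k^{h_k} such that 𝔞 = 𝔟 · 𝔠_1⋯𝔠_t. -/

import Mathlib

open NumberField

/-- An order in the field `K`: a subring that is free of rank `2` as a `ℤ`-module. -/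
def IsQuadraticOrder (K : Type*) [Field K] (O : Subring K) : Prop :=
  Module.Free ℤ O ∧ Module.finrank ℤ O = 2

/-- The conductor of an order `O` in `K`: the index `[𝒪_K : O]` of `O` in the
ring of integers (the integral closure of `ℤ` in `K`). -/
noncomputable def orderConductor (K : Type*) [Field K] (O : Subring K) : ℕ :=
  AddSubgroup.relIndex O.toAddSubgroup (integralClosure ℤ K).toSubring.toAddSubgroup

/-- A proper ideal of an order `O` in `K`: a nonzero ideal whose multiplier ring
`{β ∈ K : β𝔞 ⊆ 𝔞}` is exactly `O`. -/
def IsProperIdeal {K : Type*} [Field K] (O : Subring K) (𝔞 : Ideal O) : Prop :=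
  𝔞 ≠ ⊥ ∧ ∀ β : K, (∀ a ∈ 𝔞, ∃ c ∈ 𝔞, β * (a : K) = (c : K)) ↔ β ∈ O

/-!
If `N(𝔞) = ∏ dᵢ` with pairwise coprime `dᵢ`, the ideals `𝔞 + (dᵢ)` contain `𝔞` and are pairwise
comaximal, and their product lies in `𝔞 + (∏ dᵢ) = 𝔞`; by the Chinese remainder theorem
`𝔞 = ∏ (𝔞 + (dᵢ))` and `N(𝔞) = ∏ N(𝔞 + (dᵢ))`. As `dᵢ` kills `O ⧸ (𝔞 + (dᵢ))`, every prime
dividing its order divides `dᵢ`, which forces `N(𝔞 + (dᵢ)) = dᵢ`. Conversely, ideals of pairwise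
coprime norms are comaximal, so their norms multiply. Properness passes to factors since
`β𝔟 ⊆ 𝔟` implies `β𝔟𝔠 ⊆ 𝔟𝔠`.
-/

open Function

theorem Nat.Coprime.dvd_of_dvd_prod {ι : Type*} [Fintype ι] [DecidableEq ι] {a : ℕ}
    {b : ι → ℕ} {i : ι} (hcop : ∀ j ≠ i, a.Coprime (b j)) (h : a ∣ ∏ j, b j) : a ∣ b i := by
  rw [← Finset.mul_prod_erase _ _ (Finset.mem_univ i)] at h
  exact (Nat.Coprime.prod_right fun j hj => hcop j (Finset.ne_of_mem_erase hj)).dvd_of_dvd_mul_right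
    h

theorem Nat.pairwise_coprime_option_elim {ι : Type*} {a : ℕ} {b : ι → ℕ}
    (ha : ∀ i, a.Coprime (b i)) (hb : Pairwise (Nat.Coprime on b)) :
    Pairwise (Nat.Coprime on fun o : Option ι => o.elim a b) := by
  rintro (_ | i) (_ | j) hij
  · exact (hij rfl).elim
  · exact ha j
  · exact (ha i).symm
  · exact hb (mt (congrArg some) hij)

namespace Ideal

variable {R : Type*} [CommRing R]

theorem natCast_card_quotient_mem (I : Ideal R) : (Nat.card (R ⧸ I) : R) ∈ I := by
  rw [← Quotient.eq_zero_iff_mem, map_natCast, ← nsmul_one, card_nsmul_eq_zero']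

theorem isCoprime_of_natCast_mem {I J : Ideal R} {a b : ℕ} (hab : a.Coprime b)
    (ha : (a : R) ∈ I) (hb : (b : R) ∈ J) : IsCoprime I J := by
  have hspan := (isCoprime_span_singleton_iff _ _).mpr (hab.cast (R := R))
  rw [isCoprime_iff_sup_eq] at hspan ⊢
  exact top_unique (hspan ▸ sup_le_sup ((span_singleton_le_iff_mem _).mpr ha)
    ((span_singleton_le_iff_mem _).mpr hb))

theorem coprime_card_quotient_of_natCast_mem {J : Ideal R} [Finite (R ⧸ J)] {d e : ℕ}
    (hd : (d : R) ∈ J) (hde : d.Coprime e) : (Nat.card (R ⧸ J)).Coprime e := by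
  have hkill : ∀ x : R ⧸ J, d • x = 0 := fun x => by
    rw [nsmul_eq_mul, ← map_natCast (Quotient.mk J), Quotient.eq_zero_iff_mem.mpr hd, zero_mul]
  exact Nat.Coprime.coprime_dvd_left (card_dvd_exponent_nsmul_rank' _ hkill) (hde.pow_left _)

theorem card_quotient_prod {ι : Type*} [Fintype ι] {J : ι → Ideal R}
    (hJ : Pairwise (IsCoprime on J)) :
    Nat.card (R ⧸ ∏ i, J i) = ∏ i, Nat.card (R ⧸ J i) := by
  rw [prod_eq_iInf_of_pairwise_isCoprime fun i _ j _ hij => hJ hij, ← Nat.card_pi]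
  simp only [Finset.mem_univ, iInf_pos]
  exact Nat.card_congr (quotientInfRingEquivPiQuotient J hJ).toEquiv

theorem prod_sup_span_singleton_le {ι : Type*} (s : Finset ι) (I : Ideal R) {x : ι → R}
    (hx : ∏ i ∈ s, x i ∈ I) : ∏ i ∈ s, (I ⊔ span {x i}) ≤ I := by
  have h : map (Quotient.mk I) (∏ i ∈ s, (I ⊔ span {x i})) = ⊥ := by
    rw [← mapHom_apply, map_prod]
    simp only [mapHom_apply, map_sup, map_quotient_self, bot_sup_eq, map_span, Set.image_singleton,
      prod_span_singleton, ← map_prod, Quotient.eq_zero_iff_mem.mpr hx, span_singleton_eq_bot]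
  simpa only [map_eq_bot_iff_le_ker, mk_ker] using h

theorem pairwise_isCoprime_sup_span_natCast {ι : Type*} {d : ι → ℕ}
    (hd : Pairwise (Nat.Coprime on d)) (I : Ideal R) :
    Pairwise (IsCoprime on fun i => I ⊔ span {(d i : R)}) := fun _ _ hij =>
  isCoprime_of_natCast_mem (hd hij) (mem_sup_right (mem_span_singleton_self _))
    (mem_sup_right (mem_span_singleton_self _))

theorem eq_prod_sup_span_natCast {ι : Type*} [Fintype ι] {d : ι → ℕ}
    (hd : Pairwise (Nat.Coprime on d)) {I : Ideal R} (hI : Nat.card (R ⧸ I) = ∏ i, d i) :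
    I = ∏ i, (I ⊔ span {(d i : R)}) := by
  refine le_antisymm ?_ (prod_sup_span_singleton_le _ I ?_)
  · rw [prod_eq_iInf_of_pairwise_isCoprime fun i _ j _ hij =>
      pairwise_isCoprime_sup_span_natCast hd I hij]
    exact le_iInf₂ fun i _ => le_sup_left
  · rw [← Nat.cast_prod, ← hI]
    exact natCast_card_quotient_mem I

theorem card_quotient_eq_prod_iff {ι : Type*} [Fintype ι] {d : ι → ℕ}
    (hd : Pairwise (Nat.Coprime on d)) (hd0 : ∀ i, d i ≠ 0) (I : Ideal R) :
    Nat.card (R ⧸ I) = ∏ i, d i ↔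
      ∃ J : ι → Ideal R, (∀ i, Nat.card (R ⧸ J i) = d i) ∧ I = ∏ i, J i := by
  classical
  constructor
  · intro hI
    set J : ι → Ideal R := fun i => I ⊔ span {(d i : R)}
    have : Finite (R ⧸ I) :=
      Nat.finite_of_card_ne_zero (hI ▸ Finset.prod_ne_zero_iff.mpr fun i _ => hd0 i)
    have (i : ι) : Finite (R ⧸ J i) :=
      Finite.of_surjective _ (Quotient.factor_surjective (le_sup_left : I ≤ J i))
    have hcop {i j : ι} (hij : i ≠ j) : (Nat.card (R ⧸ J i)).Coprime (d j) :=
      coprime_card_quotient_of_natCast_mem (mem_sup_right (mem_span_singleton_self _)) (hd hij)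
    have hcard : ∏ i, Nat.card (R ⧸ J i) = ∏ i, d i := by
      rw [← card_quotient_prod (pairwise_isCoprime_sup_span_natCast hd I),
        ← eq_prod_sup_span_natCast hd hI, hI]
    refine ⟨J, fun i => Nat.dvd_antisymm ?_ ?_, eq_prod_sup_span_natCast hd hI⟩
    · exact Nat.Coprime.dvd_of_dvd_prod (fun j hji => hcop hji.symm)
        (hcard ▸ Finset.dvd_prod_of_mem _ (Finset.mem_univ i))
    · exact Nat.Coprime.dvd_of_dvd_prod (b := fun j => Nat.card (R ⧸ J j))
        (fun j hji => (hcop hji).symm)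
        (hcard.symm ▸ Finset.dvd_prod_of_mem _ (Finset.mem_univ i))
  · rintro ⟨J, hJ, rfl⟩
    rw [card_quotient_prod fun i j hij => isCoprime_of_natCast_mem (hd hij)
      (hJ i ▸ natCast_card_quotient_mem _) (hJ j ▸ natCast_card_quotient_mem _)]
    exact Finset.prod_congr rfl fun i _ => hJ i

end Ideal

theorem IsProperIdeal.of_dvd {K : Type*} [Field K] {O : Subring K} {I J : Ideal O}
    (hJ : IsProperIdeal O J) (hIJ : I ∣ J) : IsProperIdeal O I := by
  obtain ⟨I', rfl⟩ := hIJ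
  refine ⟨fun hI => hJ.1 (by rw [hI, Ideal.bot_mul]), fun β => ⟨fun hβ => (hJ.2 β).mp ?_,
    fun hβ a ha => ⟨⟨β, hβ⟩ * a, I.mul_mem_left _ ha, rfl⟩⟩⟩
  intro a ha
  refine Submodule.mul_induction_on ha (fun i hi j hj => ?_) ?_
  · obtain ⟨c, hc, hβi⟩ := hβ i hi
    exact ⟨c * j, Ideal.mul_mem_mul hc hj, by push_cast; rw [← mul_assoc, hβi]⟩
  · rintro x y ⟨cx, hcx, hβx⟩ ⟨cy, hcy, hβy⟩
    exact ⟨cx + cy, add_mem hcx hcy, by push_cast; rw [mul_add, hβx, hβy]⟩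

theorem norm_splitting_general_conductor_general
    (K : Type*) [Field K]
    (O : Subring K)
    (f : ℕ)
    (t : ℕ) (l : Fin t → ℕ) (lexp : Fin t → ℕ)
    (hl : ∀ k, (l k).Prime) (hlinj : Function.Injective l) (hlexp : ∀ k, 0 < lexp k)
    (hffact : f = ∏ k, l k ^ lexp k)
    (𝔞 : Ideal O) (h𝔞 : IsProperIdeal O 𝔞)
    (m n : ℕ) (h : Fin t → ℕ) (hn : 0 < n) (hnf : Nat.Coprime n f)
    (hmfact : m = n * ∏ k, l k ^ h k) :
    Nat.card (↥O ⧸ 𝔞) = m ↔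
      ∃ (𝔟 : Ideal O) (𝔠 : Fin t → Ideal O),
        IsProperIdeal O 𝔟 ∧ Nat.card (↥O ⧸ 𝔟) = n ∧
        (∀ k, IsProperIdeal O (𝔠 k)) ∧ (∀ k, Nat.card (↥O ⧸ 𝔠 k) = l k ^ h k) ∧
        𝔞 = 𝔟 * ∏ k, 𝔠 k := by
  have hlf (k : Fin t) : l k ∣ f :=
    hffact ▸ (dvd_pow_self _ (hlexp k).ne').trans (Finset.dvd_prod_of_mem _ (Finset.mem_univ k))
  set d : Option (Fin t) → ℕ := fun o => o.elim n fun k => l k ^ h k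
  have hd : Pairwise (Nat.Coprime on d) :=
    Nat.pairwise_coprime_option_elim (fun k => ((hnf.coprime_dvd_right (hlf k)).pow_right _))
      fun i j hij => ((Nat.coprime_primes (hl i) (hl j)).mpr (hlinj.ne hij)).pow _ _
  have hd0 : ∀ o, d o ≠ 0 := by
    rintro (_ | k)
    exacts [hn.ne', pow_ne_zero _ (hl k).ne_zero]
  rw [hmfact, show n * ∏ k, l k ^ h k = ∏ o, d o from (Fintype.prod_option d).symm,
    Ideal.card_quotient_eq_prod_iff hd hd0]
  constructor
  · rintro ⟨J, hJ, rfl⟩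
    rw [Fintype.prod_option] at h𝔞 ⊢
    exact ⟨J none, fun k => J (some k), h𝔞.of_dvd (dvd_mul_right _ _), hJ none,
      fun k => h𝔞.of_dvd (dvd_mul_of_dvd_right (Finset.dvd_prod_of_mem _ (Finset.mem_univ k)) _),
      fun k => hJ (some k), rfl⟩
  · rintro ⟨𝔟, 𝔠, -, h𝔟, -, h𝔠, rfl⟩
    refine ⟨fun o => o.elim 𝔟 𝔠, ?_, (Fintype.prod_option fun o => o.elim 𝔟 𝔠).symm⟩
    rintro (_ | k)
    exacts [h𝔟, h𝔠 k]

theorem norm_splitting_general_conductor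
    (K : Type*) [Field K] [NumberField K]
    (hdeg : Module.finrank ℚ K = 2) (himag : IsEmpty (K →+* ℝ))
    (O : Subring K) (hO : IsQuadraticOrder K O)
    (f : ℕ) (hf : orderConductor K O = f)
    (t : ℕ) (l : Fin t → ℕ) (lexp : Fin t → ℕ)
    (hl : ∀ k, (l k).Prime) (hlinj : Function.Injective l) (hlexp : ∀ k, 0 < lexp k)
    (hffact : f = ∏ k, l k ^ lexp k)
    (𝔞 : Ideal O) (h𝔞 : IsProperIdeal O 𝔞)
    (m n : ℕ) (h : Fin t → ℕ) (hn : 0 < n) (hnf : Nat.Coprime n f)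
    (hmfact : m = n * ∏ k, l k ^ h k) :
    Nat.card (↥O ⧸ 𝔞) = m ↔
      ∃ (𝔟 : Ideal O) (𝔠 : Fin t → Ideal O),
        IsProperIdeal O 𝔟 ∧ Nat.card (↥O ⧸ 𝔟) = n ∧
        (∀ k, IsProperIdeal O (𝔠 k)) ∧ (∀ k, Nat.card (↥O ⧸ 𝔠 k) = l k ^ h k) ∧
        𝔞 = 𝔟 * ∏ k, 𝔠 k :=
  norm_splitting_general_conductor_general K O f t l lexp hl hlinj hlexp hffact 𝔞 h𝔞 m n h hn hnf
    hmfact
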